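/- arXiv:1906.03432 — 7 statements merged into one kernel-verified Lean document; each statement's English description precedes it below -/
import Mathlib

section
/- Let A(q) be an arbitrary formal power series over a commutative ring with A(0)=0 (or more generally any family of terms indexed by positive integers), and set B(q) = ∏_{m=1}^∞ (1 + A(q^m)). Then ∑_{K} gcd(K)^4 ∏_{k ∈ K} A(q^k) = ∑_{d=1}^∞ J_4(d) (B(q^d) − 1), where K runs over all nonempty finite subsets of the positive integers and J_4 is the fourth Jordan totient function J_4(d) = d^4 ∏_{p | d} (1 − p^{-4}). -/
/-!
Sorting the 4-tuples in `[1, g]^4` by their gcd with `g` gives `g^4 = ∑_{d ∣ g} J₄(d)`.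
Substituting this for `gcd(K)^4` and exchanging the sums turns the left side into
`∑_d J₄(d) ∑_{K ≠ ∅, d ∣ gcd K} ∏_{k ∈ K} a k`, and the inner sum is the expansion of
`∏_m (1 + a (d * m)) - 1` over the nonempty sets of multiples of `d`. Coefficientwise the
truncations are harmless, because `a k` has order at least `k`, so every product containing
a factor `a k` with `k > n` has vanishing coefficient of `q^n`.
-/

/-- The fourth Jordan totient function: the number of 4-tuples `(c₁,c₂,c₃,c₄)` with
`1 ≤ cᵢ ≤ d` and `gcd(c₁,c₂,c₃,c₄,d) = 1`.  (This equals `d^4 * ∏_{p ∣ d} (1 - p^{-4})`.) -/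
def jordanTotient4 (d : ℕ) : ℕ :=
  ((Finset.Icc 1 d ×ˢ Finset.Icc 1 d ×ˢ Finset.Icc 1 d ×ˢ Finset.Icc 1 d).filter
    fun c => Nat.gcd c.1 (Nat.gcd c.2.1 (Nat.gcd c.2.2.1 (Nat.gcd c.2.2.2 d))) = 1).card

open Finset PowerSeries

namespace JordanTotient4

def tupleGcd (c : ℕ × ℕ × ℕ × ℕ) (d : ℕ) : ℕ :=
  Nat.gcd c.1 (Nat.gcd c.2.1 (Nat.gcd c.2.2.1 (Nat.gcd c.2.2.2 d)))

def box (d : ℕ) : Finset (ℕ × ℕ × ℕ × ℕ) :=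
  Icc 1 d ×ˢ Icc 1 d ×ˢ Icc 1 d ×ˢ Icc 1 d

def scale (e : ℕ) (c : ℕ × ℕ × ℕ × ℕ) : ℕ × ℕ × ℕ × ℕ :=
  (e * c.1, e * c.2.1, e * c.2.2.1, e * c.2.2.2)

theorem card_box (d : ℕ) : #(box d) = d ^ 4 := by
  simp only [box, card_product, Nat.card_Icc, Nat.add_sub_cancel]
  ring

theorem tupleGcd_dvd_right (c : ℕ × ℕ × ℕ × ℕ) (d : ℕ) : tupleGcd c d ∣ d :=
  (Nat.gcd_dvd_right _ _).trans <| (Nat.gcd_dvd_right _ _).trans <|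
    (Nat.gcd_dvd_right _ _).trans (Nat.gcd_dvd_right _ _)

theorem tupleGcd_scale (e : ℕ) (c : ℕ × ℕ × ℕ × ℕ) (d : ℕ) :
    tupleGcd (scale e c) (e * d) = e * tupleGcd c d := by
  simp only [tupleGcd, scale, Nat.gcd_mul_left]

theorem scale_mem_box_iff {e : ℕ} (he : 0 < e) {c : ℕ × ℕ × ℕ × ℕ} {d : ℕ} :
    scale e c ∈ box (e * d) ↔ c ∈ box d := by
  simp only [scale, box, mem_product, mem_Icc, Nat.one_le_iff_ne_zero, mul_ne_zero_iff,
    he.ne', ne_eq, not_false_eq_true, true_and, Nat.mul_le_mul_left_iff he]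

theorem scale_injective {e : ℕ} (he : 0 < e) : Function.Injective (scale e) := by
  rintro ⟨c₁, c₂, c₃, c₄⟩ ⟨c₁', c₂', c₃', c₄'⟩ h
  simp_all [scale, he.ne']

theorem exists_eq_scale_of_dvd_tupleGcd {e : ℕ} {c : ℕ × ℕ × ℕ × ℕ} {d : ℕ}
    (h : e ∣ tupleGcd c d) : ∃ c', c = scale e c' := by
  obtain ⟨c₁, c₂, c₃, c₄⟩ := c
  simp only [tupleGcd, Nat.dvd_gcd_iff] at h
  obtain ⟨⟨x₁, rfl⟩, ⟨x₂, rfl⟩, ⟨x₃, rfl⟩, ⟨x₄, rfl⟩, -⟩ := h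
  exact ⟨(x₁, x₂, x₃, x₄), rfl⟩

theorem filter_tupleGcd_eq {e : ℕ} (he : 0 < e) (d : ℕ) :
    {c ∈ box (e * d) | tupleGcd c (e * d) = e} =
      {c ∈ box d | tupleGcd c d = 1}.image (scale e) := by
  ext c
  simp only [mem_filter, mem_image]
  constructor
  · rintro ⟨hc, hgcd⟩
    obtain ⟨c, rfl⟩ := exists_eq_scale_of_dvd_tupleGcd (dvd_of_eq hgcd.symm)
    rw [tupleGcd_scale, mul_eq_left₀ he.ne'] at hgcd
    exact ⟨c, ⟨(scale_mem_box_iff he).1 hc, hgcd⟩, rfl⟩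
  · rintro ⟨c, ⟨hc, hgcd⟩, rfl⟩
    rw [scale_mem_box_iff he, tupleGcd_scale, hgcd, mul_one]
    exact ⟨hc, rfl⟩

theorem card_filter_tupleGcd_eq {e : ℕ} (he : 0 < e) (d : ℕ) :
    #{c ∈ box (e * d) | tupleGcd c (e * d) = e} = jordanTotient4 d := by
  rw [filter_tupleGcd_eq he, card_image_of_injective _ (scale_injective he)]
  rfl

end JordanTotient4

open JordanTotient4 in
theorem sum_divisors_jordanTotient4 (g : ℕ) : ∑ d ∈ g.divisors, jordanTotient4 d = g ^ 4 := by
  rcases g.eq_zero_or_pos with rfl | hg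
  · simp
  have hfibres : ∀ e ∈ g.divisors, #{c ∈ box g | tupleGcd c g = e} = jordanTotient4 (g / e) := by
    intro e he
    conv_lhs => rw [← Nat.mul_div_cancel' (Nat.dvd_of_mem_divisors he)]
    exact card_filter_tupleGcd_eq (Nat.pos_of_mem_divisors he) _
  calc ∑ d ∈ g.divisors, jordanTotient4 d
      = ∑ e ∈ g.divisors, jordanTotient4 (g / e) := (Nat.sum_div_divisors g _).symm
    _ = #(box g) := by
      rw [card_eq_sum_card_fiberwise (f := (tupleGcd · g)) (t := g.divisors)
        fun c _ => Nat.mem_divisors.2 ⟨tupleGcd_dvd_right c g, hg.ne'⟩]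
      exact (sum_congr rfl hfibres).symm
    _ = g ^ 4 := card_box g

theorem Nat.filter_Icc_dvd_eq_divisors {g n : ℕ} (hg : g ∈ Icc 1 n) :
    {d ∈ Icc 1 n | d ∣ g} = g.divisors := by
  obtain ⟨hg1, hgn⟩ := mem_Icc.1 hg
  ext d
  simp only [mem_filter, mem_Icc, Nat.mem_divisors]
  constructor
  · rintro ⟨-, hd⟩
    exact ⟨hd, by omega⟩
  · rintro ⟨hd, -⟩
    exact ⟨⟨Nat.pos_of_dvd_of_pos hd hg1, (Nat.le_of_dvd hg1 hd).trans hgn⟩, hd⟩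

theorem Nat.gcd_id_mem_Icc_of_subset {K : Finset ℕ} {n : ℕ} (hK : K ⊆ Icc 1 n)
    (hne : K.Nonempty) : K.gcd id ∈ Icc 1 n := by
  obtain ⟨k, hk⟩ := hne
  obtain ⟨hk1, hkn⟩ := mem_Icc.1 (hK hk)
  have hdvd : K.gcd id ∣ k := Finset.gcd_dvd hk
  exact mem_Icc.2 ⟨Nat.pos_of_dvd_of_pos hdvd hk1, (Nat.le_of_dvd hk1 hdvd).trans hkn⟩

theorem Finset.prod_one_add_sub_one {ι R : Type*} [CommRing R] (f : ι → R) (s : Finset ι) :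
    ∏ i ∈ s, (1 + f i) - 1 = ∑ t ∈ s.powerset with t.Nonempty, ∏ i ∈ t, f i := by
  have hempty : {t ∈ s.powerset | ¬t.Nonempty} = {∅} := by
    ext t
    simp only [mem_filter, mem_powerset, not_nonempty_iff_eq_empty, mem_singleton,
      and_iff_right_iff_imp]
    rintro rfl
    exact empty_subset s
  rw [prod_one_add, ← sum_filter_add_sum_filter_not s.powerset Finset.Nonempty, hempty,
    sum_singleton, prod_empty, add_sub_cancel_right]

namespace PowerSeries

variable {R : Type*} [CommRing R] {a : ℕ → R⟦X⟧}

theorem coeff_prod_eq_zero_of_mem (ha : ∀ k, X ^ k ∣ a k) {K : Finset ℕ} {k n : ℕ}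
    (hk : k ∈ K) (hn : n < k) : coeff n (∏ i ∈ K, a i) = 0 :=
  X_pow_dvd_iff.1 ((ha k).trans (dvd_prod_of_mem a hk)) n hn

theorem coeff_prod_one_add_mul_sub_one (ha : ∀ k, X ^ k ∣ a k) {d : ℕ} (hd : 0 < d) (n : ℕ) :
    coeff n (∏ m ∈ Icc 1 n, (1 + a (d * m)) - 1) =
      ∑ K ∈ {K ∈ (Icc 1 n).powerset | K.Nonempty} with d ∣ K.gcd id, coeff n (∏ k ∈ K, a k) := by
  have hmultiples : {K ∈ {K ∈ (Icc 1 n).powerset | K.Nonempty} | d ∣ K.gcd id} =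
      {K ∈ {k ∈ Icc 1 n | d ∣ k}.powerset | K.Nonempty} := by
    ext K
    simp only [mem_filter, mem_powerset, Finset.dvd_gcd_iff, id, subset_iff]
    grind
  rw [← prod_image (f := (1 + a ·)) (g := (d * ·)) fun x _ y _ h => Nat.eq_of_mul_eq_mul_left hd h,
    prod_one_add_sub_one, map_sum, hmultiples]
  refine (sum_subset ?_ ?_).symm
  · refine filter_subset_filter _ (powerset_mono.2 fun k hk => ?_)
    obtain ⟨hk, m, rfl⟩ := mem_filter.1 hk
    obtain ⟨hdm, hdmn⟩ := mem_Icc.1 hk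
    exact mem_image.2
      ⟨m, mem_Icc.2 ⟨Nat.pos_of_mul_pos_left hdm, (Nat.le_mul_of_pos_left m hd).trans hdmn⟩, rfl⟩
  · intro K hK hK'
    obtain ⟨hsub, hne⟩ := mem_filter.1 hK
    -- the extra sets contain a multiple of `d` outside `[1, n]`, necessarily above `n`
    obtain ⟨k, hkK, hk⟩ := not_subset.1 fun h => hK' (mem_filter.2 ⟨mem_powerset.2 h, hne⟩)
    obtain ⟨m, hm, rfl⟩ := mem_image.1 (mem_powerset.1 hsub hkK)
    refine coeff_prod_eq_zero_of_mem ha hkK ?_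
    simp only [mem_filter, mem_Icc, dvd_mul_right, and_true, not_and, not_le] at hk hm
    exact hk (Nat.one_le_iff_ne_zero.2 (Nat.mul_ne_zero hd.ne' (by omega)))

end PowerSeries

/-- `a k` stands for `A(q^k)`; the identity is stated for the coefficient of `q^n`, to which
only `K ⊆ {1,…,n}`, `d ≤ n` and the factors with `m ≤ n` contribute. -/
theorem jordan_totient_generating_identity {R : Type*} [CommRing R]
    (a : ℕ → PowerSeries R)
    (ha : ∀ k j : ℕ, j < k → PowerSeries.coeff j (a k) = 0) (n : ℕ) :
    ∑ K ∈ (Finset.Icc 1 n).powerset.filter (fun K => K.Nonempty),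
      ((K.gcd id : ℕ) : R) ^ 4 * PowerSeries.coeff n (∏ k ∈ K, a k)
      = ∑ d ∈ Finset.Icc 1 n,
          (jordanTotient4 d : R) *
            PowerSeries.coeff n ((∏ m ∈ Finset.Icc 1 n, (1 + a (d * m))) - 1) := by
  have hX : ∀ k, X ^ k ∣ a k := fun k => X_pow_dvd_iff.2 (ha k)
  calc _ = ∑ K ∈ (Icc 1 n).powerset with K.Nonempty, ∑ d ∈ Icc 1 n,
          if d ∣ K.gcd id then (jordanTotient4 d : R) * coeff n (∏ k ∈ K, a k) else 0 := by
        refine sum_congr rfl fun K hK => ?_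
        obtain ⟨hKn, hne⟩ := mem_filter.1 hK
        rw [← sum_filter, ← sum_mul, ← Nat.cast_sum,
          Nat.filter_Icc_dvd_eq_divisors (Nat.gcd_id_mem_Icc_of_subset (mem_powerset.1 hKn) hne),
          sum_divisors_jordanTotient4, Nat.cast_pow]
    _ = ∑ d ∈ Icc 1 n, ∑ K ∈ (Icc 1 n).powerset with K.Nonempty,
          if d ∣ K.gcd id then (jordanTotient4 d : R) * coeff n (∏ k ∈ K, a k) else 0 :=
        sum_comm
    _ = _ := sum_congr rfl fun d hd => by
        rw [coeff_prod_one_add_mul_sub_one hX (mem_Icc.1 hd).1, mul_sum]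
        exact (sum_filter _ _).symm
end

section
/- Let V̄ be a finite dimensional vector space over a field of characteristic zero and N : V̄ → V̄ a nilpotent endomorphism with nilpotency index ν (i.e. N^ν ≠ 0 and N^{ν+1} = 0). Then the induced derivation Sym^k N on Sym^k V̄, defined by (Sym^k N)(x_1⋯x_k) = ∑_i x_1⋯(N x_i)⋯x_k, has nilpotency index exactly k·ν. -/
/-!
Let `L v = ∑ⱼ (b.repr v)ⱼ Xⱼ`. It identifies `V` with the linear forms and intertwines `N` with `D`,
so `D^{ν+1}` kills every variable. By the Leibniz rule, if `D^{a+1} x = 0` and `D^{b+1} y = 0`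
then `D^{a+b+1} (x y) = 0`, which gives the upper bound on monomials of degree `k`. For the lower
bound take `x = L v` with `N^ν v ≠ 0`: in `D^{kν} (x^k)` only the term in which every factor is
differentiated exactly `ν` times survives, so `(ν!)^k D^{kν} (x^k) = (kν)! (D^ν x)^k`, which is
nonzero in characteristic zero.
-/

open MvPolynomial Finset

namespace Derivation

variable {R A : Type*} [CommSemiring R] [CommSemiring A] [Algebra R A] (D : Derivation R A A)

lemma pow_succ_apply (n : ℕ) (x : A) :
    ((D : Module.End R A) ^ (n + 1)) x = D (((D : Module.End R A) ^ n) x) := by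
  rw [_root_.pow_succ', Module.End.mul_apply, coeFn_coe]

lemma pow_apply_mul (n : ℕ) (x y : A) :
    ((D : Module.End R A) ^ n) (x * y) = ∑ ij ∈ antidiagonal n,
      n.choose ij.1 • (((D : Module.End R A) ^ ij.1) x * ((D : Module.End R A) ^ ij.2) y) := by
  induction n with
  | zero => simp
  | succ n ih =>
    rw [Finset.sum_antidiagonal_choose_succ_nsmul
      (fun i j => ((D : Module.End R A) ^ i) x * ((D : Module.End R A) ^ j) y),
      pow_succ_apply, ih, map_sum, ← sum_add_distrib]
    refine sum_congr rfl fun ij hij => ?_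
    rw [HasAntidiagonal.mem_antidiagonal] at hij
    rw [map_nsmul, leibniz, pow_succ_apply, pow_succ_apply, smul_eq_mul, smul_eq_mul,
      ← Nat.choose_symm_of_eq_add hij.symm, smul_add, mul_comm (D _)]

variable {D}

lemma pow_apply_mul_eq_zero {a b : ℕ} {x y : A} (hx : ((D : Module.End R A) ^ (a + 1)) x = 0)
    (hy : ((D : Module.End R A) ^ (b + 1)) y = 0) :
    ((D : Module.End R A) ^ (a + b + 1)) (x * y) = 0 := by
  rw [pow_apply_mul]
  refine sum_eq_zero fun ij hij => ?_
  rw [HasAntidiagonal.mem_antidiagonal] at hij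
  rcases le_or_gt (a + 1) ij.1 with ha | ha
  · rw [Module.End.pow_map_zero_of_le ha hx, zero_mul, smul_zero]
  · rw [Module.End.pow_map_zero_of_le (by omega : b + 1 ≤ ij.2) hy, mul_zero, smul_zero]

lemma pow_apply_pow_eq_zero {a : ℕ} {x : A} (hx : ((D : Module.End R A) ^ (a + 1)) x = 0)
    (n : ℕ) : ((D : Module.End R A) ^ (n * a + 1)) (x ^ n) = 0 := by
  induction n with
  | zero => simp
  | succ n ih =>
    rw [_root_.pow_succ' x, show (n + 1) * a + 1 = a + n * a + 1 by ring]
    exact pow_apply_mul_eq_zero hx ih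

lemma factorial_pow_smul_pow_apply_pow {a : ℕ} {x : A}
    (hx : ((D : Module.End R A) ^ (a + 1)) x = 0) (n : ℕ) :
    a.factorial ^ n • ((D : Module.End R A) ^ (n * a)) (x ^ n) =
      (n * a).factorial • (((D : Module.End R A) ^ a) x) ^ n := by
  induction n with
  | zero => simp
  | succ n ih =>
    have hsingle : ((D : Module.End R A) ^ ((n + 1) * a)) (x * x ^ n) =
        ((n + 1) * a).choose a • (((D : Module.End R A) ^ a) x *
          ((D : Module.End R A) ^ (n * a)) (x ^ n)) := by
      rw [pow_apply_mul, sum_eq_single (a, n * a)]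
      · rintro ⟨i, j⟩ hij hne
        rw [HasAntidiagonal.mem_antidiagonal] at hij
        rcases lt_or_gt_of_ne (show i ≠ a by grind) with hi | hi
        · rw [Module.End.pow_map_zero_of_le (by grind) (pow_apply_pow_eq_zero hx n), mul_zero,
            smul_zero]
        · rw [Module.End.pow_map_zero_of_le hi hx, zero_mul, smul_zero]
      · intro h
        simp [HasAntidiagonal.mem_antidiagonal, Nat.succ_mul, add_comm] at h
    have hchoose : ((n + 1) * a).choose a * a.factorial * (n * a).factorial =
        ((n + 1) * a).factorial := by
      simpa [Nat.succ_mul] using Nat.choose_mul_factorial_mul_factorial (n := (n + 1) * a)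
        (k := a) (by nlinarith)
    rw [_root_.pow_succ' x, hsingle, ← hchoose]
    simp only [nsmul_eq_mul, Nat.cast_pow] at ih ⊢
    push_cast
    calc _ = (((n + 1) * a).choose a * a.factorial * ((D : Module.End R A) ^ a) x) *
          (a.factorial ^ n * ((D : Module.End R A) ^ (n * a)) (x ^ n)) := by ring
      _ = _ := by rw [ih]; ring

lemma pow_mul_apply_pow_ne_zero [NoZeroDivisors A] [CharZero A] {a : ℕ} {x : A}
    (hx : ((D : Module.End R A) ^ (a + 1)) x = 0) (hx' : ((D : Module.End R A) ^ a) x ≠ 0)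
    (n : ℕ) : ((D : Module.End R A) ^ (n * a)) (x ^ n) ≠ 0 := by
  intro h
  have key := factorial_pow_smul_pow_apply_pow hx n
  rw [h, smul_zero, eq_comm, nsmul_eq_mul, mul_eq_zero, Nat.cast_eq_zero] at key
  exact hx' (eq_zero_of_pow_eq_zero (key.resolve_left (Nat.factorial_ne_zero _)))

end Derivation

namespace MvPolynomial

variable {R σ : Type*} [CommSemiring R]

lemma isHomogeneous_linearCombination_X (c : σ →₀ R) :
    (Finsupp.linearCombination R X c : MvPolynomial σ R).IsHomogeneous 1 := by
  rw [← mem_homogeneousSubmodule, homogeneousSubmodule_one_eq_span_X,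
    ← Finsupp.range_linearCombination]
  exact ⟨c, rfl⟩

variable {D : Derivation R (MvPolynomial σ R) (MvPolynomial σ R)} {a : ℕ}

lemma derivation_pow_apply_monomial_eq_zero
    (hX : ∀ i, ((D : Module.End R (MvPolynomial σ R)) ^ (a + 1)) (X i) = 0)
    (s : σ →₀ ℕ) (c : R) :
    ((D : Module.End R (MvPolynomial σ R)) ^ (s.degree * a + 1)) (monomial s c) = 0 := by
  induction s using Finsupp.induction with
  | zero => simp [derivation_C]
  | single_add i e t _ _ ih =>
    rw [monomial_single_add, map_add, Finsupp.degree_single,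
      show (e + t.degree) * a + 1 = e * a + t.degree * a + 1 by ring]
    exact Derivation.pow_apply_mul_eq_zero (Derivation.pow_apply_pow_eq_zero (hX i) e) ih

lemma derivation_pow_apply_eq_zero_of_isHomogeneous
    (hX : ∀ i, ((D : Module.End R (MvPolynomial σ R)) ^ (a + 1)) (X i) = 0)
    {k : ℕ} {p : MvPolynomial σ R} (hp : p.IsHomogeneous k) : ((D : Module.End R (MvPolynomial σ R)) ^ (k * a + 1)) p = 0 := by
  rw [p.as_sum, map_sum]
  refine sum_eq_zero fun s hs => ?_
  have hdeg : s.degree = k := by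
    by_contra h
    exact mem_support_iff.mp hs (hp.coeff_eq_zero h)
  rw [← hdeg]
  exact derivation_pow_apply_monomial_eq_zero hX s _

end MvPolynomial

theorem sym_power_nilpotency_index_general
    {F : Type*} [Field F] [CharZero F] {ι : Type*} [Fintype ι]
    {V : Type*} [AddCommGroup V] [Module F V]
    (b : Module.Basis ι F V) (N : Module.End F V) (ν : ℕ)
    (hν : N ^ ν ≠ 0) (hν' : N ^ (ν + 1) = 0) (k : ℕ)
    (D : Derivation F (MvPolynomial ι F) (MvPolynomial ι F))
    (hD : ∀ i : ι, D (X i) = ∑ j : ι, b.repr (N (b i)) j • (X j : MvPolynomial ι F)) :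
    (∃ p : MvPolynomial ι F, p.IsHomogeneous k ∧
        ((D.toLinearMap : Module.End F (MvPolynomial ι F)) ^ (k * ν)) p ≠ 0) ∧
      (∀ p : MvPolynomial ι F, p.IsHomogeneous k →
        ((D.toLinearMap : Module.End F (MvPolynomial ι F)) ^ (k * ν + 1)) p = 0) := by
  let L : V →ₗ[F] MvPolynomial ι F := Finsupp.linearCombination F X ∘ₗ b.repr.toLinearMap
  have hL : D.toLinearMap ∘ₗ L = L ∘ₗ N := b.ext fun i => by
    simp only [LinearMap.comp_apply, Derivation.coeFn_coe, LinearEquiv.coe_coe, L,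
      b.repr_self, Finsupp.linearCombination_single, one_smul, hD]
    rw [Finsupp.linearCombination_apply, Finsupp.sum_fintype _ _ fun _ => zero_smul F (X _)]
  have hpow (m : ℕ) (v : V) : ((D : Module.End F (MvPolynomial ι F)) ^ m) (L v) = L ((N ^ m) v) :=
    LinearMap.congr_fun (Module.End.commute_pow_left_of_commute hL m) v
  have hX (i : ι) : ((D : Module.End F (MvPolynomial ι F)) ^ (ν + 1)) (X i) = 0 := by
    simpa [L, hν'] using hpow (ν + 1) (b i)
  obtain ⟨v, hv⟩ : ∃ v, (N ^ ν) v ≠ 0 := by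
    by_contra! h
    exact hν (LinearMap.ext h)
  have hL_inj : Function.Injective L :=
    (linearIndependent_iff_injective_finsuppLinearCombination.mp (linearIndependent_X ι F)).comp
      b.repr.injective
  refine ⟨⟨L v ^ k, by simpa [L] using (isHomogeneous_linearCombination_X (b.repr v)).pow k,
      D.pow_mul_apply_pow_ne_zero ?_ ?_ k⟩,
    fun p hp => derivation_pow_apply_eq_zero_of_isHomogeneous hX hp⟩
  · rw [hpow, hν', LinearMap.zero_apply, map_zero]
  · rwa [hpow, ne_eq, map_eq_zero_iff L hL_inj]

/-- Let `V` be a finite dimensional vector space over a field of characteristic zero (presented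
via a basis `b : Basis ι F V` with `ι` finite) and `N : V → V` a nilpotent endomorphism of
nilpotency index `ν` (i.e. `N^ν ≠ 0` and `N^{ν+1} = 0`).  Model `Sym^k V` as the homogeneous
degree-`k` part of the symmetric algebra `Sym V = F[X_i : i ∈ ι]`, and let `D` be the unique
derivation of the symmetric algebra extending `N`, i.e. `D (X i) = ∑_j (N b_i)_j • X j`.
Then `D` has nilpotency index exactly `k·ν` on `Sym^k V`: `D^{kν}` is nonzero on some
homogeneous polynomial of degree `k`, and `D^{kν+1}` kills all of them. -/
theorem sym_power_nilpotency_index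
    {F : Type*} [Field F] [CharZero F] {ι : Type*} [Fintype ι] [DecidableEq ι]
    {V : Type*} [AddCommGroup V] [Module F V]
    (b : Module.Basis ι F V) (N : Module.End F V) (ν : ℕ)
    (hν : N ^ ν ≠ 0) (hν' : N ^ (ν + 1) = 0) (k : ℕ)
    (D : Derivation F (MvPolynomial ι F) (MvPolynomial ι F))
    (hD : ∀ i : ι, D (X i) = ∑ j : ι, b.repr (N (b i)) j • (X j : MvPolynomial ι F)) :
    (∃ p : MvPolynomial ι F, p.IsHomogeneous k ∧
        ((D.toLinearMap : Module.End F (MvPolynomial ι F)) ^ (k * ν)) p ≠ 0) ∧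
      (∀ p : MvPolynomial ι F, p.IsHomogeneous k →
        ((D.toLinearMap : Module.End F (MvPolynomial ι F)) ^ (k * ν + 1)) p = 0) :=
  sym_power_nilpotency_index_general b N ν hν hν' k D hD
end

section
/- Let V̄ be a finite dimensional vector space over a field of characteristic zero and N : V̄ → V̄ a nilpotent endomorphism with N ≠ 0, N² = 0, and dim(im N) = 2. Then for every 2 ≤ i ≤ dim V̄ − 2, the induced derivation on ∧^i V̄ has nilpotency index exactly 2. -/
/-!
Write `D = ∑ⱼ Nⱼ`, where `Nⱼ` applies `N` in the `j`-th slot. Expanding, `Dᵏ (v₁ ∧ ⋯ ∧ vᵢ)` is the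
sum over all `f : Fin k → Fin i` of the wedge in which slot `m` receives `N` once for every `t`
with `f t = m`. For `k = 3` every term vanishes: a slot hit twice is killed by `N² = 0`, and
otherwise three slots lie in the plane `im N`.

For `D² ≠ 0`, choose `N a, N b` spanning `im N ⊆ ker N` and extend them by `x₁, …, x_{i-2}` in
`ker N` to an independent family, which is possible since `dim ker N = dim V - 2 ≥ i`. Then
`D² (a ∧ b ∧ x₁ ∧ ⋯) = 2 • (N a ∧ N b ∧ x₁ ∧ ⋯)`, which is nonzero in characteristic zero.
-/

open Function Module Finset exteriorPower

namespace exteriorPower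

lemma ιMulti_ne_zero_of_linearIndependent {K V : Type*} [Field K] [AddCommGroup V] [Module K V]
    {n : ℕ} {v : Fin n → V} (hv : LinearIndependent K v) : ιMulti K n v ≠ 0 := by
  simpa [ιMulti_family] using (ιMulti_family_linearIndependent_field (n := n) hv).ne_zero
    (Set.powersetCard.ofFinEmbEquiv (OrderIso.refl (Fin n)).toOrderEmbedding)

end exteriorPower

theorem LinearIndependent.card_le_finrank_of_forall_mem {K M ι : Type*} [DivisionRing K]
    [AddCommGroup M] [Module K M] [Fintype ι] {W : Submodule K M} [Module.Finite K W] {v : ι → M}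
    (hv : LinearIndependent K v) (hW : ∀ t, v t ∈ W) : Fintype.card ι ≤ finrank K W := by
  rw [← finrank_span_eq_card hv]
  exact Submodule.finrank_mono (Submodule.span_le.mpr (Set.range_subset_iff.mpr hW))

section InducedDerivation

variable {R M : Type*} [CommRing R] [AddCommGroup M] [Module R M] {n : ℕ}

def IsInducedDerivation (N : Module.End R M) (D : Module.End R (⋀[R]^n M)) : Prop :=
  ∀ v : Fin n → M, D (ιMulti R n v) = ∑ j, ιMulti R n (update v j (N (v j)))

def applyAlong (N : Module.End R M) {k : ℕ} (f : Fin k → Fin n) (v : Fin n → M) : Fin n → M :=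
  fun m => (N ^ #{t | f t = m}) (v m)

lemma applyAlong_cons (N : Module.End R M) {k : ℕ} (j : Fin n) (f : Fin k → Fin n)
    (v : Fin n → M) :
    applyAlong N (Fin.cons j f) v = update (applyAlong N f v) j (N (applyAlong N f v j)) := by
  ext m
  rcases eq_or_ne m j with rfl | hmj
  · simp [applyAlong, Fin.card_filter_univ_succ, pow_succ']
  · simp [applyAlong, Fin.card_filter_univ_succ, hmj, Ne.symm hmj]

variable {N : Module.End R M} {D : Module.End R (⋀[R]^n M)}

lemma IsInducedDerivation.pow_apply_ιMulti (hD : IsInducedDerivation N D) (k : ℕ)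
    (v : Fin n → M) :
    (D ^ k) (ιMulti R n v) = ∑ f : Fin k → Fin n, ιMulti R n (applyAlong N f v) := by
  induction k with
  | zero =>
    simp only [pow_zero, Module.End.one_apply, Fintype.sum_unique]
    rfl
  | succ k ih =>
    rw [pow_succ', Module.End.mul_apply, ih, map_sum,
      ← (Fin.consEquiv fun _ => Fin n).sum_comp, Fintype.sum_prod_type, Finset.sum_comm]
    refine sum_congr rfl fun f _ => (hD _).trans (sum_congr rfl fun j _ => ?_)
    rw [← applyAlong_cons]
    rfl

lemma IsInducedDerivation.apply_ιMulti_cons_cons {m : ℕ} {D : Module.End R (⋀[R]^(m + 2) M)}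
    (hD : IsInducedDerivation N D) (a b : M) {x : Fin m → M} (hx : ∀ j, N (x j) = 0) :
    D (ιMulti R (m + 2) (Fin.cons a (Fin.cons b x))) =
      ιMulti R (m + 2) (Fin.cons (N a) (Fin.cons b x)) +
        ιMulti R (m + 2) (Fin.cons a (Fin.cons (N b) x)) := by
  have hrest : ∑ j : Fin m, ιMulti R (m + 2) (update (Fin.cons a (Fin.cons b x)) j.succ.succ
      (N (x j))) = 0 :=
    sum_eq_zero fun j _ => (ιMulti R (m + 2)).map_coord_zero j.succ.succ (by simp [hx])
  rw [hD, Fin.sum_univ_succ, Fin.sum_univ_succ, Fin.update_cons_zero, ← Fin.cons_update,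
    Fin.update_cons_zero]
  simpa using hrest

lemma IsInducedDerivation.pow_two_apply_ιMulti_cons_cons {m : ℕ}
    {D : Module.End R (⋀[R]^(m + 2) M)} (hD : IsInducedDerivation N D) (hN : N ^ 2 = 0)
    (a b : M) {x : Fin m → M} (hx : ∀ j, N (x j) = 0) :
    (D ^ 2) (ιMulti R (m + 2) (Fin.cons a (Fin.cons b x))) =
      (2 : R) • ιMulti R (m + 2) (Fin.cons (N a) (Fin.cons (N b) x)) := by
  have hNN (y : M) : N (N y) = 0 := by rw [← Module.End.mul_apply, ← pow_two, hN]; rfl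
  rw [pow_two, Module.End.mul_apply, hD.apply_ιMulti_cons_cons a b hx, map_add,
    hD.apply_ιMulti_cons_cons _ _ hx, hD.apply_ιMulti_cons_cons _ _ hx, hNN, hNN]
  have h0 : ιMulti R (m + 2) (Fin.cons 0 (Fin.cons b x)) = 0 :=
    (ιMulti R _).map_coord_zero 0 rfl
  have h1 : ιMulti R (m + 2) (Fin.cons a (Fin.cons 0 x)) = 0 :=
    (ιMulti R _).map_coord_zero 1 rfl
  rw [h0, h1, zero_add, add_zero, two_smul]

end InducedDerivation

theorem exists_linearIndependent_cons_cons {K M : Type*} [DivisionRing K] [AddCommGroup M]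
    [Module K M] {v : Fin 2 → M} (hv : LinearIndependent K v) {m : ℕ}
    (hm : m + 2 ≤ finrank K M) :
    ∃ x : Fin m → M, LinearIndependent K (Fin.cons (v 0) (Fin.cons (v 1) x)) := by
  induction m with
  | zero => exact ⟨Fin.elim0, by convert hv using 1; ext j; fin_cases j <;> rfl⟩
  | succ m ih =>
    obtain ⟨x, hx⟩ := ih (by omega)
    obtain ⟨c, hc⟩ := exists_linearIndependent_snoc_of_lt_finrank hx (by omega)
    exact ⟨Fin.snoc x c, by rwa [Fin.cons_snoc_eq_snoc_cons, Fin.cons_snoc_eq_snoc_cons]⟩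

section Field

variable {K V : Type*} [Field K] [AddCommGroup V] [Module K V] [FiniteDimensional K V]
  {N : Module.End K V}

lemma ιMulti_applyAlong_eq_zero (hN : N ^ 2 = 0) {n k : ℕ} (hk : finrank K (LinearMap.range N) < k)
    (f : Fin k → Fin n) (v : Fin n → V) : ιMulti K n (applyAlong N f v) = 0 := by
  refine (ιMulti K n).map_linearDependent _ fun hli => ?_
  by_cases hf : Injective f
  · have hmem (t : Fin k) : applyAlong N f v (f t) ∈ LinearMap.range N := by
      obtain ⟨c, hc⟩ : ∃ c, #{s | f s = f t} = c + 1 :=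
        Nat.exists_eq_add_one.mpr (card_pos.mpr ⟨t, by simp⟩)
      rw [applyAlong, hc, pow_succ', Module.End.mul_apply]
      exact LinearMap.mem_range_self N _
    have := (hli.comp f hf).card_le_finrank_of_forall_mem hmem
    rw [Fintype.card_fin] at this
    omega
  · obtain ⟨s, t, hst, hne⟩ : ∃ s t, f s = f t ∧ s ≠ t := by simpa [Function.Injective] using hf
    have htwo : 2 ≤ #{u | f u = f t} :=
      one_lt_card.mpr ⟨s, by simpa using hst, t, by simp, hne⟩
    exact hli.ne_zero (f t) (by simp [applyAlong, pow_eq_zero_of_le htwo hN])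

lemma IsInducedDerivation.pow_eq_zero_of_finrank_range_lt {n k : ℕ}
    {D : Module.End K (⋀[K]^n V)} (hD : IsInducedDerivation N D) (hN : N ^ 2 = 0)
    (hk : finrank K (LinearMap.range N) < k) : D ^ k = 0 := by
  ext v
  simp [hD.pow_apply_ιMulti, ιMulti_applyAlong_eq_zero hN hk]

lemma exists_linearIndependent_cons_cons_ker (hN : N ^ 2 = 0)
    (hrk : 2 ≤ finrank K (LinearMap.range N)) {m : ℕ} (hm : m + 2 ≤ finrank K (LinearMap.ker N)) :
    ∃ (a b : V) (x : Fin m → V), (∀ j, N (x j) = 0) ∧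
      LinearIndependent K (Fin.cons (N a) (Fin.cons (N b) x)) := by
  have hle : LinearMap.range N ≤ LinearMap.ker N :=
    LinearMap.range_le_ker_iff.mpr (by rw [← Module.End.mul_eq_comp, ← pow_two, hN])
  set e := finBasis K (LinearMap.range N)
  let w : Fin 2 → LinearMap.ker N := fun t => Submodule.inclusion hle (e (Fin.castLE hrk t))
  have hw : LinearIndependent K w :=
    (e.linearIndependent.comp _ (Fin.castLE_injective hrk)).map' _ (Submodule.ker_inclusion _ _ _)
  obtain ⟨x, hx⟩ := exists_linearIndependent_cons_cons hw hm
  choose u hu using fun t => (e (Fin.castLE hrk t)).2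
  refine ⟨u 0, u 1, fun j => x j, fun j => (x j).2, ?_⟩
  have hcoe : (LinearMap.ker N).subtype ∘ Fin.cons (w 0) (Fin.cons (w 1) x) =
      Fin.cons (N (u 0)) (Fin.cons (N (u 1)) fun j => (x j : V)) := by
    ext j
    refine Fin.cases ?_ (Fin.cases ?_ fun j => ?_) j <;> simp [w, hu]
  exact hcoe ▸ hx.map' _ (Submodule.ker_subtype _)

end Field

theorem exterior_power_derivation_nilpotency_index_typeII_general
    {F : Type*} [Field F] [CharZero F]
    {V : Type*} [AddCommGroup V] [Module F V] [FiniteDimensional F V]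
    (N : Module.End F V)
    (hN2 : N ^ 2 = 0)
    (hrk : Module.finrank F (LinearMap.range N) = 2)
    (i : ℕ) (hi2 : 2 ≤ i) (hi : i ≤ Module.finrank F V - 2)
    (D : Module.End F (⋀[F]^i V))
    (hD : ∀ v : Fin i → V,
      (D ⟨ExteriorAlgebra.ιMulti F i v,
            ExteriorAlgebra.ιMulti_range F i (Set.mem_range_self v)⟩ :
          ExteriorAlgebra F V)
        = ∑ j : Fin i, ExteriorAlgebra.ιMulti F i (Function.update v j (N (v j)))) :
    D ^ 2 ≠ 0 ∧ D ^ 3 = 0 := by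
  have hDer : IsInducedDerivation N D := fun v => Subtype.ext <| (hD v).trans (by simp)
  refine ⟨?_, hDer.pow_eq_zero_of_finrank_range_lt hN2 (by omega)⟩
  obtain ⟨m, rfl⟩ : ∃ m, i = m + 2 := ⟨i - 2, by omega⟩
  have hker : m + 2 ≤ finrank F (LinearMap.ker N) := by
    have := LinearMap.finrank_range_add_finrank_ker N
    omega
  obtain ⟨a, b, x, hx, hli⟩ := exists_linearIndependent_cons_cons_ker hN2 hrk.ge hker
  intro hD2
  have h := hDer.pow_two_apply_ιMulti_cons_cons hN2 a b hx
  rw [hD2, LinearMap.zero_apply, eq_comm, smul_eq_zero] at h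
  exact h.elim two_ne_zero (ιMulti_ne_zero_of_linearIndependent hli)

/-- Let `V` be a finite dimensional vector space over a field of characteristic zero and
`N : V → V` a nilpotent endomorphism with `N ≠ 0`, `N² = 0` and `dim(im N) = 2`.
Then for every `2 ≤ i ≤ dim V − 2`, the induced derivation `D` on the exterior power
`⋀^i V` (characterized by `D (x₁ ∧ ⋯ ∧ x_i) = ∑_j x₁ ∧ ⋯ ∧ N x_j ∧ ⋯ ∧ x_i`)
has nilpotency index exactly `2`, i.e. `D² ≠ 0` and `D³ = 0`. -/
theorem exterior_power_derivation_nilpotency_index_typeII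
    {F : Type*} [Field F] [CharZero F]
    {V : Type*} [AddCommGroup V] [Module F V] [FiniteDimensional F V]
    (N : Module.End F V)
    (hN1 : N ≠ 0) (hN2 : N ^ 2 = 0)
    (hrk : Module.finrank F (LinearMap.range N) = 2)
    (i : ℕ) (hi2 : 2 ≤ i) (hi : i ≤ Module.finrank F V - 2)
    (D : Module.End F (⋀[F]^i V))
    (hD : ∀ v : Fin i → V,
      (D ⟨ExteriorAlgebra.ιMulti F i v,
            ExteriorAlgebra.ιMulti_range F i (Set.mem_range_self v)⟩ :
          ExteriorAlgebra F V)
        = ∑ j : Fin i, ExteriorAlgebra.ιMulti F i (Function.update v j (N (v j)))) :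
    D ^ 2 ≠ 0 ∧ D ^ 3 = 0 :=
  exterior_power_derivation_nilpotency_index_typeII_general N hN2 hrk i hi2 hi D hD
end

section
/- Let (V̄, q̄) be a nondegenerate quadratic space over an algebraically closed field of characteristic zero with dim V̄ ≥ 4, and let N ∈ 𝔰𝔬(V̄, q̄) satisfy N ≠ 0, N² = 0, and dim(im N) = 2. Then there exists a basis of V̄ in which q̄ takes the standard hyperbolic form (with Gram matrix having identity off-diagonal blocks, and an extra 1 on the diagonal if dim V̄ is odd) and N sends the basis element e_1 to e_2' , e_2 to −e_1', and kills all other basis vectors (here e_i, e_i' are the hyperbolic basis pairs). -/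
/-!
Since `N` is skew with `N² = 0`, its image is totally isotropic and `B (N x) x = 0`. Pick `u₁`
with `p = N u₁ ≠ 0` and `u₂` with `B p u₂ = 1`, and put `q = N u₂`; correcting `u₁, u₂` by
multiples of `p, q` gives isotropic `e₁, e₂` such that `(e₁, -q), (e₂, p)` are orthogonal hyperbolic
pairs with `N e₁ = p`, `N e₂ = q`. Their span `U` is nondegenerate, so `V = U ⊕ U^⊥`. As
`im N = span (p, q) ⊆ U`, skewness gives `N (U^⊥) = 0`. Finally `U^⊥` is nondegenerate and, the
field being algebraically closed, has an orthonormal basis; its vectors pair up as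
`(w + i w') / 2, w - i w'` into hyperbolic pairs, with one vector left over when `dim V` is odd.
-/

open Module Submodule

theorem Submodule.eq_span_range_of_linearIndependent {K V ι : Type*} [DivisionRing K]
    [AddCommGroup V] [Module K V] [Fintype ι] {P : Submodule K V} [FiniteDimensional K P] {v : ι → V}
    (hv : LinearIndependent K v) (hvP : ∀ i, v i ∈ P) (hP : finrank K P = Fintype.card ι) :
    P = span K (Set.range v) :=
  (eq_of_le_of_finrank_eq (span_le.2 (Set.range_subset_iff.2 hvP))
    (by rw [hP, finrank_span_eq_card hv])).symm

theorem Fin.castAdd_ne_natAdd {m n : ℕ} (i : Fin m) (j : Fin n) :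
    Fin.castAdd n i ≠ Fin.natAdd m j := by
  rw [Ne, Fin.ext_iff, Fin.val_castAdd, Fin.val_natAdd]
  omega

namespace LinearMap.BilinForm

section CommRing

variable {R M : Type*} [CommRing R] [AddCommGroup M] [Module R M] {B : LinearMap.BilinForm R M}

section DualPairing

variable {ι : Type*} [Fintype ι] [DecidableEq ι] {v : ι → M} {d : ι → ι}

theorem apply_sum_smul_of_dual (h : ∀ i j, B (v i) (v (d j)) = if i = j then 1 else 0)
    (c : ι → R) (j : ι) : B (∑ i, c i • v i) (v (d j)) = c j := by
  simp [h]

theorem linearIndependent_of_dual (h : ∀ i j, B (v i) (v (d j)) = if i = j then 1 else 0) :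
    LinearIndependent R v :=
  Fintype.linearIndependent_iff.2 fun c hc j => by
    rw [← apply_sum_smul_of_dual h c j, hc, map_zero, LinearMap.zero_apply]

theorem nondegenerate_restrict_span_of_dual (hB : B.IsRefl)
    (h : ∀ i j, B (v i) (v (d j)) = if i = j then 1 else 0) :
    (B.restrict (span R (Set.range v))).Nondegenerate := by
  refine nondegenerate_restrict_of_disjoint_orthogonal B hB <| disjoint_def.2 fun x hx hxo => ?_
  obtain ⟨c, rfl⟩ := (mem_span_range_iff_exists_fun R).1 hx
  have hc : ∀ j, c j = 0 := fun j => by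
    rw [← apply_sum_smul_of_dual h c j]
    exact hB _ _ (hxo _ (subset_span (Set.mem_range_self _)))
  simp [hc]

end DualPairing

variable (B) in
/-- Only one orientation of each pairing is recorded; for symmetric `B` the others follow. -/
structure IsHyperbolicFamily {r c : ℕ} (e e' : Fin r → M) (f : Fin c → M) : Prop where
  apply_pair : ∀ i j, B (e i) (e' j) = if i = j then 1 else 0
  isotropic_left : ∀ i j, B (e i) (e j) = 0
  isotropic_right : ∀ i j, B (e' i) (e' j) = 0
  apply_odd : ∀ k l, B (f k) (f l) = if k = l then 1 else 0
  odd_left : ∀ k i, B (f k) (e i) = 0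
  odd_right : ∀ k i, B (f k) (e' i) = 0

def hyperbolicDual {r c : ℕ} : Fin r ⊕ Fin r ⊕ Fin c → Fin r ⊕ Fin r ⊕ Fin c
  | .inl i => .inr (.inl i)
  | .inr (.inl i) => .inl i
  | .inr (.inr k) => .inr (.inr k)

namespace IsHyperbolicFamily

variable {r c : ℕ} {e e' : Fin r → M} {f : Fin c → M}

theorem apply_dual (hB : B.IsSymm) (h : IsHyperbolicFamily B e e' f) (x y) :
    B (Sum.elim e (Sum.elim e' f) x) (Sum.elim e (Sum.elim e' f) (hyperbolicDual y)) =
      if x = y then 1 else 0 := by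
  rcases x with i | i | k <;> rcases y with j | j | l <;>
    simp only [hyperbolicDual, Sum.elim_inl, Sum.elim_inr, reduceCtorEq, Sum.inl.injEq,
      Sum.inr.injEq, if_false, h.apply_pair, h.isotropic_left, h.isotropic_right, h.apply_odd,
      h.odd_left, h.odd_right]
  all_goals rw [hB.eq]; simp only [h.apply_pair, h.odd_left, h.odd_right, eq_comm]

theorem linearIndependent (hB : B.IsSymm) (h : IsHyperbolicFamily B e e' f) :
    LinearIndependent R (Sum.elim e (Sum.elim e' f)) :=
  linearIndependent_of_dual (h.apply_dual hB)

theorem nondegenerate_restrict_span (hB : B.IsSymm) (h : IsHyperbolicFamily B e e' f) :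
    (B.restrict (span R (Set.range (Sum.elim e (Sum.elim e' f))))).Nondegenerate :=
  nondegenerate_restrict_span_of_dual hB.isRefl (h.apply_dual hB)

theorem linearIndependent_right (hB : B.IsSymm) (h : IsHyperbolicFamily B e e' f) :
    LinearIndependent R e' :=
  (h.linearIndependent hB).comp _ (Sum.inr_injective.comp Sum.inl_injective)

theorem of_restrict {W : Submodule R M} {e e' : Fin r → W} {f : Fin c → W}
    (h : IsHyperbolicFamily (B.restrict W) e e' f) :
    IsHyperbolicFamily B (Subtype.val ∘ e) (Subtype.val ∘ e') (Subtype.val ∘ f) :=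
  ⟨h.1, h.2, h.3, h.4, h.5, h.6⟩

theorem append (hB : B.IsRefl) {U : Submodule R M} {s : ℕ} {e₂ e₂' : Fin s → M}
    (h : IsHyperbolicFamily B e e' ![]) (h₂ : IsHyperbolicFamily B e₂ e₂' f)
    (he : ∀ i, e i ∈ U) (he' : ∀ i, e' i ∈ U) (he₂ : ∀ j, e₂ j ∈ B.orthogonal U)
    (he₂' : ∀ j, e₂' j ∈ B.orthogonal U) (hf : ∀ k, f k ∈ B.orthogonal U) :
    IsHyperbolicFamily B (Fin.append e e₂) (Fin.append e' e₂') f := by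
  have hUW : ∀ u ∈ U, ∀ w ∈ B.orthogonal U, B u w = 0 := fun u hu w hw => hw u hu
  have hWU : ∀ u ∈ U, ∀ w ∈ B.orthogonal U, B w u = 0 := fun u hu w hw => hB _ _ (hw u hu)
  have hne : ∀ (i : Fin r) (j : Fin s), Fin.castAdd s i ≠ Fin.natAdd r j := Fin.castAdd_ne_natAdd
  refine ⟨fun i j => ?_, fun i j => ?_, fun i j => ?_, h₂.apply_odd, fun k i => ?_, fun k i => ?_⟩
  · induction i using Fin.addCases <;> induction j using Fin.addCases <;>
      simp [h.apply_pair, h₂.apply_pair, hUW, hWU, he, he', he₂', he₂, hne, (hne _ _).symm]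
  · induction i using Fin.addCases <;> induction j using Fin.addCases <;>
      simp [h.isotropic_left, h₂.isotropic_left, hUW, hWU, he, he₂]
  · induction i using Fin.addCases <;> induction j using Fin.addCases <;>
      simp [h.isotropic_right, h₂.isotropic_right, hUW, hWU, he', he₂']
  · induction i using Fin.addCases <;> simp [h₂.odd_left, hWU, he, hf]
  · induction i using Fin.addCases <;> simp [h₂.odd_right, hWU, he', hf]

end IsHyperbolicFamily

end CommRing

variable {K V : Type*} [Field K] [AddCommGroup V] [Module K V] {B : LinearMap.BilinForm K V}

theorem exists_orthonormal_basis [IsAlgClosed K] [FiniteDimensional K V] [NeZero (2 : K)]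
    (hB : B.IsSymm) (hBnd : B.Nondegenerate) :
    ∃ w : Basis (Fin (finrank K V)) K V, ∀ i j, B (w i) (w j) = if i = j then 1 else 0 := by
  have := invertibleOfNonzero (two_ne_zero : (2 : K) ≠ 0)
  obtain ⟨v, hv⟩ := exists_orthogonal_basis (isSymm_iff.1 hB)
  have hvv : ∀ i, B (v i) (v i) ≠ 0 := hv.not_isOrtho_basis_self_of_separatingLeft hBnd.1
  choose s hs using fun i => IsAlgClosed.exists_eq_mul_self (B (v i) (v i))
  have hs0 : ∀ i, s i ≠ 0 := fun i h => hvv i (by rw [hs i, h, mul_zero])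
  refine ⟨v.unitsSMul fun i => (Units.mk0 (s i) (hs0 i))⁻¹, fun i j => ?_⟩
  rcases eq_or_ne i j with rfl | hij
  · simp [Basis.unitsSMul_apply, Units.smul_def, hs i, hs0 i]
  · simp [Basis.unitsSMul_apply, Units.smul_def, hij, hv hij]

theorem exists_isHyperbolicFamily [IsAlgClosed K] [FiniteDimensional K V] [NeZero (2 : K)]
    (hB : B.IsSymm) (hBnd : B.Nondegenerate) :
    ∃ s c : ℕ, c ≤ 1 ∧ finrank K V = 2 * s + c ∧
      ∃ (e e' : Fin s → V) (f : Fin c → V), IsHyperbolicFamily B e e' f := by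
  classical
  set s := finrank K V / 2
  set c := finrank K V % 2
  obtain ⟨w₀, hw₀⟩ := exists_orthonormal_basis hB hBnd
  let w := w₀.reindex (Fintype.equivOfCardEq (β := Fin s ⊕ Fin s ⊕ Fin c) (by simp; omega))
  have hw : ∀ x y, B (w x) (w y) = if x = y then 1 else 0 := by simp [w, hw₀]
  obtain ⟨ι, hι⟩ := IsAlgClosed.exists_pow_nat_eq (-1 : K) two_pos
  refine ⟨s, c, by omega, by omega, fun j => (2⁻¹ : K) • (w (.inl j) + ι • w (.inr (.inl j))),
    fun j => w (.inl j) - ι • w (.inr (.inl j)), fun k => w (.inr (.inr k)),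
    ⟨fun i j => ?_, fun i j => ?_, fun i j => ?_, fun k l => ?_, fun k i => ?_, fun k i => ?_⟩⟩ <;>
    simp only [map_add, map_sub, map_smul, LinearMap.add_apply, LinearMap.sub_apply,
      LinearMap.smul_apply, hw, smul_eq_mul, Sum.inl.injEq, Sum.inr.injEq, reduceCtorEq, if_false]
  · split_ifs
    · field_simp
      linear_combination -hι
    · ring
  · split_ifs
    · field_simp
      linear_combination hι
    · ring
  · split_ifs
    · linear_combination hι
    · ring
  all_goals simp

theorem IsHyperbolicFamily.exists_append [IsAlgClosed K] [FiniteDimensional K V] [NeZero (2 : K)]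
    (hB : B.IsSymm) (hBnd : B.Nondegenerate) {r : ℕ} {e e' : Fin r → V}
    (h : IsHyperbolicFamily B e e' ![]) :
    ∃ s c : ℕ, c ≤ 1 ∧ finrank K V = 2 * (r + s) + c ∧
      ∃ (e₂ e₂' : Fin s → V) (f : Fin c → V),
        IsHyperbolicFamily B (Fin.append e e₂) (Fin.append e' e₂') f ∧
        ∀ x, Sum.elim e₂ (Sum.elim e₂' f) x ∈
          B.orthogonal (span K (Set.range (Sum.elim e (Sum.elim e' ![])))) := by
  set U := span K (Set.range (Sum.elim e (Sum.elim e' ![])))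
  have hUW : IsCompl U (B.orthogonal U) :=
    isCompl_orthogonal_of_restrict_nondegenerate hB.isRefl (h.nondegenerate_restrict_span hB)
  have hW : (B.restrict (B.orthogonal U)).Nondegenerate :=
    nondegenerate_restrict_of_disjoint_orthogonal B hB.isRefl <| by
      rw [orthogonal_orthogonal hBnd hB.isRefl]
      exact hUW.disjoint.symm
  have hU : finrank K U = 2 * r := by
    rw [finrank_span_eq_card (h.linearIndependent hB)]
    simp [two_mul]
  obtain ⟨s, c, hc, hdim, e₂, e₂', f, h₂⟩ := exists_isHyperbolicFamily (hB.restrict _) hW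
  have hmem : ∀ x, Sum.elim e (Sum.elim e' ![]) x ∈ U := fun x => subset_span ⟨x, rfl⟩
  refine ⟨s, c, hc, by rw [← Submodule.finrank_add_eq_of_isCompl hUW]; omega,
    Subtype.val ∘ e₂, Subtype.val ∘ e₂', Subtype.val ∘ f,
    h.append hB.isRefl h₂.of_restrict (fun i => hmem (.inl i)) (fun i => hmem (.inr (.inl i)))
      (fun j => (e₂ j).2) (fun j => (e₂' j).2) (fun k => (f k).2), ?_⟩
  rintro (j | j | k) <;> exact Subtype.prop _

section SkewNilpotent

variable {N : Module.End K V} (hN : ∀ x y, B (N x) y + B x (N y) = 0)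
include hN

theorem apply_self_eq_zero_of_skew [NeZero (2 : K)] (hB : B.IsSymm) (x : V) : B (N x) x = 0 := by
  have h := hN x x
  rw [hB.eq x (N x), ← two_mul] at h
  exact (mul_eq_zero.1 h).resolve_left two_ne_zero

theorem apply_apply_eq_zero_of_skew (hN2 : N ^ 2 = 0) (x y : V) : B (N x) (N y) = 0 := by
  rw [eq_neg_of_add_eq_zero_left (hN x (N y)), ← Module.End.mul_apply, ← sq, hN2]
  simp

theorem exists_hyperbolic_pairs_of_skew [NeZero (2 : K)] (hB : B.IsSymm) (hBnd : B.Nondegenerate)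
    (hN2 : N ^ 2 = 0) (hN0 : N ≠ 0) :
    ∃ e e' : Fin 2 → V, IsHyperbolicFamily B e e' ![] ∧ N (e 0) = e' 1 ∧ N (e 1) = -e' 0 := by
  obtain ⟨u₁, hu₁⟩ : ∃ u, N u ≠ 0 := DFunLike.ne_iff.1 hN0
  obtain ⟨y, hy⟩ : ∃ y, B (N u₁) y ≠ 0 := not_forall.1 (mt (hBnd.1 _) hu₁)
  set u₂ := (B (N u₁) y)⁻¹ • y
  have h₁₂ : B (N u₁) u₂ = 1 := by simp [u₂, hy]
  have h₂₁ : B u₂ (N u₁) = 1 := by rw [hB.eq, h₁₂]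
  have h₂₁' : B (N u₂) u₁ = -1 := by rw [eq_neg_of_add_eq_zero_left (hN u₂ u₁), ← hB.eq, h₁₂]
  have h₁₂' : B u₁ (N u₂) = -1 := by rw [hB.eq, h₂₁']
  have hNN : ∀ x, N (N x) = 0 := fun x => by rw [← Module.End.mul_apply, ← sq, hN2]; rfl
  have hself : ∀ x, B (N x) x = 0 := apply_self_eq_zero_of_skew hN hB
  have hself' : ∀ x, B x (N x) = 0 := fun x => by rw [hB.eq, hself]
  have hNN' := apply_apply_eq_zero_of_skew hN hN2
  refine ⟨![u₁ + (B u₁ u₁ / 2) • N u₂, u₂ - (B u₂ u₂ / 2) • N u₁ + B u₁ u₂ • N u₂], ![-N u₂, N u₁],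
    ⟨?_, ?_, ?_, finZeroElim, finZeroElim, finZeroElim⟩, ?_, ?_⟩ <;>
    simp [Fin.forall_fin_two, h₁₂, h₂₁, h₂₁', h₁₂', hNN, hself, hself', hNN']
  exact ⟨by field_simp; ring, by rw [hB.eq u₂ u₁, add_neg_cancel], by field_simp; ring⟩

theorem apply_eq_zero_of_mem_orthogonal (hB : B.IsRefl) (hBnd : B.Nondegenerate)
    {U : Submodule K V} (hU : LinearMap.range N ≤ U) {w : V} (hw : w ∈ B.orthogonal U) :
    N w = 0 :=
  hBnd.1 _ fun y => by
    rw [eq_neg_of_add_eq_zero_left (hN w y), hB _ _ (hw _ (hU ⟨y, rfl⟩)), neg_zero]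

end SkewNilpotent

end LinearMap.BilinForm

/-- Normal form for a Type II log monodromy operator.  Let `(V, B)` be a nondegenerate
symmetric bilinear space over an algebraically closed field of characteristic zero with
`dim V ≥ 4`, and let `N ∈ 𝔰𝔬(V, B)` (i.e. `B(Nx,y) + B(x,Ny) = 0`) satisfy `N ≠ 0`,
`N² = 0` and `dim(im N) = 2`.  Then there is a basis
`e_1, …, e_r, e_1', …, e_r' (, f)` of `V` (with `dim V = 2r + c`, `c ≤ 1`, `r ≥ 2`;
the extra vector `f` present exactly when `dim V` is odd) in which `B` takes the standard
hyperbolic form `B(e_i, e_j') = δ_{ij}`, `B(e_i,e_j) = B(e_i',e_j') = 0`,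
`B(f,f) = 1`, `B(f, e_i) = B(f, e_i') = 0`, and
`N e_1 = e_2'`, `N e_2 = −e_1'`, and `N` kills all other basis vectors. -/
theorem typeII_monodromy_normal_form
    {K : Type*} [Field K] [IsAlgClosed K] [CharZero K]
    {V : Type*} [AddCommGroup V] [Module K V] [FiniteDimensional K V]
    (B : LinearMap.BilinForm K V) (hBsymm : ∀ x y, B x y = B y x)
    (hBnd : B.Nondegenerate)
    (N : Module.End K V)
    (hso : ∀ x y, B (N x) y + B x (N y) = 0)
    (hN0 : N ≠ 0) (hN2 : N ^ 2 = 0)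
    (hrk : Module.finrank K (LinearMap.range N) = 2) :
    ∃ (r c : ℕ), ∃ _hr : 2 ≤ r, c ≤ 1 ∧ Module.finrank K V = 2 * r + c ∧
      ∃ b : Module.Basis (Fin r ⊕ Fin r ⊕ Fin c) K V,
        -- Gram matrix: hyperbolic pairs `e_i = b (inl i)`, `e_i' = b (inr (inl i))`,
        -- plus an extra orthonormal vector `f = b (inr (inr k))` when `dim V` is odd
        (∀ i j : Fin r, B (b (Sum.inl i)) (b (Sum.inr (Sum.inl j))) = if i = j then 1 else 0) ∧
        (∀ i j : Fin r, B (b (Sum.inl i)) (b (Sum.inl j)) = 0) ∧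
        (∀ i j : Fin r, B (b (Sum.inr (Sum.inl i))) (b (Sum.inr (Sum.inl j))) = 0) ∧
        (∀ k : Fin c, B (b (Sum.inr (Sum.inr k))) (b (Sum.inr (Sum.inr k))) = 1) ∧
        (∀ (k : Fin c) (i : Fin r), B (b (Sum.inr (Sum.inr k))) (b (Sum.inl i)) = 0) ∧
        (∀ (k : Fin c) (i : Fin r),
          B (b (Sum.inr (Sum.inr k))) (b (Sum.inr (Sum.inl i))) = 0) ∧
        -- the action of `N`
        N (b (Sum.inl ⟨0, by omega⟩)) = b (Sum.inr (Sum.inl ⟨1, by omega⟩)) ∧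
        N (b (Sum.inl ⟨1, by omega⟩)) = - b (Sum.inr (Sum.inl ⟨0, by omega⟩)) ∧
        (∀ i : Fin r, 2 ≤ (i : ℕ) → N (b (Sum.inl i)) = 0) ∧
        (∀ x : Fin r ⊕ Fin c, N (b (Sum.inr x)) = 0) := by
  have hB : B.IsSymm := ⟨hBsymm⟩
  obtain ⟨e, e', h, hNe₀, hNe₁⟩ :=
    LinearMap.BilinForm.exists_hyperbolic_pairs_of_skew hso hB hBnd hN2 hN0
  have hspan : LinearMap.range N = span K (Set.range e') := by
    refine eq_span_range_of_linearIndependent (h.linearIndependent_right hB) ?_ (by simpa using hrk)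
    simp only [Fin.forall_fin_two]
    exact ⟨⟨-e 1, by simp [hNe₁]⟩, ⟨e 0, hNe₀⟩⟩
  have hNe' : ∀ i, N (e' i) = 0 := fun i =>
    LinearMap.range_le_ker_iff.2 (by rwa [← Module.End.mul_eq_comp, ← sq])
      (hspan.ge (subset_span ⟨i, rfl⟩))
  obtain ⟨s, c, hc, hdim, e₂, e₂', f, h', hW⟩ := h.exists_append hB hBnd
  have hNW : ∀ x, N (Sum.elim e₂ (Sum.elim e₂' f) x) = 0 := fun x =>
    LinearMap.BilinForm.apply_eq_zero_of_mem_orthogonal hso hB.isRefl hBnd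
      (hspan.le.trans (span_mono (Set.range_subset_iff.2 fun i =>
        Set.mem_range_self (Sum.inr (Sum.inl i))))) (hW x)
  refine ⟨2 + s, c, by omega, hc, by omega,
    basisOfLinearIndependentOfCardEqFinrank' _ (h'.linearIndependent hB) (by simp; omega),
    ?_, ?_, ?_, ?_, ?_, ?_, ?_, ?_, ?_, ?_⟩
  all_goals simp only [coe_basisOfLinearIndependentOfCardEqFinrank', Sum.elim_inl, Sum.elim_inr]
  · exact h'.apply_pair
  · exact h'.isotropic_left
  · exact h'.isotropic_right
  · exact fun k => (h'.apply_odd k k).trans (if_pos rfl)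
  · exact h'.odd_left
  · exact h'.odd_right
  -- `⟨0, _⟩ : Fin (2 + s)` is `Fin.castAdd s 0` by definition
  · exact (congrArg N (Fin.append_left e e₂ 0)).trans (hNe₀.trans (Fin.append_left e' e₂' 1).symm)
  · exact (congrArg N (Fin.append_left e e₂ 1)).trans
      (hNe₁.trans (congrArg Neg.neg (Fin.append_left e' e₂' 0)).symm)
  · intro i hi
    induction i using Fin.addCases with
    | left i => simp only [Fin.val_castAdd] at hi; omega
    | right j => rw [Fin.append_right]; exact hNW (.inl j)
  · rintro (i | k)
    · induction i using Fin.addCases with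
      | left i => rw [Sum.elim_inl, Fin.append_left]; exact hNe' i
      | right j => rw [Sum.elim_inl, Fin.append_right]; exact hNW (.inr (.inl j))
    · exact hNW (.inr (.inr k))
end

section
/- Let G_ℝ be a topological group acting transitively on a set D, fix o ∈ D, and let K ⊆ G_ℝ be the stabilizer of o. Let Γ ⊆ G_ℝ be a subgroup such that Γ ∩ K is finite. Suppose T, T' ∈ Γ satisfy T^m · o = (T')^m · o for all integers m. Then there exists a positive integer d ≤ |Γ ∩ K| with T^d = (T')^d. -/
/-!
The elements `T'⁻ᵐ Tᵐ`, `m ≥ 0`, lie in `Γ` and fix `o`, so they lie in the finite group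
`Γ ∩ K`. By the pigeonhole principle two of them with indices `i < j ≤ |Γ ∩ K|` coincide, and
`T'⁻ⁱ Tⁱ = T'⁻ʲ Tʲ` rearranges to `T'ʲ⁻ⁱ = Tʲ⁻ⁱ`.
-/

theorem Finite.exists_lt_le_natCard_map_eq {α : Type*} [Finite α] (f : ℕ → α) :
    ∃ i j, i < j ∧ j ≤ Nat.card α ∧ f i = f j := by
  have : Fintype α := Fintype.ofFinite α
  have hcard : (Finset.univ : Finset α).card < (Finset.range (Nat.card α + 1)).card := by
    simp [Nat.card_eq_fintype_card]
  obtain ⟨i, hi, j, hj, hne, heq⟩ :=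
    Finset.exists_ne_map_eq_of_card_lt_of_maps_to hcard (f := f) fun _ _ => Finset.mem_univ _
  rw [Finset.mem_range, Nat.lt_succ_iff] at hi hj
  rcases hne.lt_or_gt with hlt | hlt
  · exact ⟨i, j, hlt, hj, heq⟩
  · exact ⟨j, i, hlt, hi, heq.symm⟩

theorem pow_sub_eq_of_inv_pow_mul_pow_eq {G : Type*} [Group G] {a b : G} {i j : ℕ} (hij : i ≤ j)
    (h : (a ^ i)⁻¹ * b ^ i = (a ^ j)⁻¹ * b ^ j) : a ^ (j - i) = b ^ (j - i) := by
  rw [pow_sub _ hij, pow_sub _ hij, eq_mul_inv_iff_mul_eq, mul_assoc, h, mul_inv_cancel_left]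

theorem inv_pow_mul_pow_mem_stabilizer {G D : Type*} [Group G] [MulAction G D] {o : D} {a b : G}
    (h : ∀ m : ℕ, b ^ m • o = a ^ m • o) (m : ℕ) :
    (a ^ m)⁻¹ * b ^ m ∈ MulAction.stabilizer G o := by
  rw [MulAction.mem_stabilizer_iff, mul_smul, h m, inv_smul_smul]

theorem pow_eq_of_pow_smul_eq_general
    {G : Type*} [Group G]
    {D : Type*} [MulAction G D]
    (o : D) (Γ : Subgroup G)
    (hfin : Finite ↥(Γ ⊓ MulAction.stabilizer G o))
    (T T' : G) (hT : T ∈ Γ) (hT' : T' ∈ Γ)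
    (h : ∀ m : ℤ, T ^ m • o = T' ^ m • o) :
    ∃ d : ℕ, 0 < d ∧ d ≤ Nat.card ↥(Γ ⊓ MulAction.stabilizer G o) ∧ T ^ d = T' ^ d := by
  have hmem (m : ℕ) : (T' ^ m)⁻¹ * T ^ m ∈ Γ ⊓ MulAction.stabilizer G o :=
    ⟨Γ.mul_mem (Γ.inv_mem (Γ.pow_mem hT' m)) (Γ.pow_mem hT m),
      inv_pow_mul_pow_mem_stabilizer (fun m => by exact_mod_cast h m) m⟩
  obtain ⟨i, j, hij, hj, heq⟩ := Finite.exists_lt_le_natCard_map_eq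
    (fun m => (⟨_, hmem m⟩ : ↥(Γ ⊓ MulAction.stabilizer G o)))
  exact ⟨j - i, Nat.sub_pos_of_lt hij, (Nat.sub_le j i).trans hj,
    (pow_sub_eq_of_inv_pow_mul_pow_eq hij.le (congrArg Subtype.val heq)).symm⟩

/-- Let `G` be a topological group acting transitively on a set `D`, fix `o ∈ D` with
stabilizer `K`, and let `Γ ≤ G` be a subgroup with `Γ ∩ K` finite.  If `T, T' ∈ Γ` satisfy
`T^m · o = (T')^m · o` for all integers `m`, then `T^d = (T')^d` for some positive integer
`d ≤ |Γ ∩ K|`. -/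
theorem pow_eq_of_pow_smul_eq
    {G : Type*} [Group G] [TopologicalSpace G] [IsTopologicalGroup G]
    {D : Type*} [MulAction G D] [MulAction.IsPretransitive G D]
    (o : D) (Γ : Subgroup G)
    (hfin : Finite ↥(Γ ⊓ MulAction.stabilizer G o))
    (T T' : G) (hT : T ∈ Γ) (hT' : T' ∈ Γ)
    (h : ∀ m : ℤ, T ^ m • o = T' ^ m • o) :
    ∃ d : ℕ, 0 < d ∧ d ≤ Nat.card ↥(Γ ⊓ MulAction.stabilizer G o) ∧ T ^ d = T' ^ d :=
  pow_eq_of_pow_smul_eq_general o Γ hfin T T' hT hT' h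
end

section
/- The system of equations 3250·a + 37674·b + 5824·c + 350·d + 14950·e + 2600·f + 325·g + 26·h + i = 37674 and 405·a + 5796·b + 672·c + 28·d + 2024·e + 276·f + 24·g + h = 5796 has a unique solution in nonnegative integers (a,b,c,d,e,f,g,h,i), namely b = 1 and all other variables equal to 0. -/
/-- The Euler characteristic constraint together with Salamon's relation for the possible LLV
decompositions of the cohomology of a hyper-Kähler manifold of OG10 type has a unique
solution in nonnegative integers, namely the multiplicity of `V_{(2,2)}` is `1` and all the
other multiplicities vanish. -/
theorem og10_multiplicity_equations_unique_solution
    (a b c d e f g h i : ℕ) :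
    (3250 * a + 37674 * b + 5824 * c + 350 * d + 14950 * e + 2600 * f + 325 * g + 26 * h + i
        = 37674 ∧
      405 * a + 5796 * b + 672 * c + 28 * d + 2024 * e + 276 * f + 24 * g + h = 5796)
    ↔ (a = 0 ∧ b = 1 ∧ c = 0 ∧ d = 0 ∧ e = 0 ∧ f = 0 ∧ g = 0 ∧ h = 0 ∧ i = 0) := by
  omega
end

section
/- Let 𝔤 be a Lie algebra acting on a graded commutative algebra H by derivations in the sense that e.(x∪y) = (e.x)∪y + x∪(e.y), and suppose 𝔤 = 𝔤_{−2} ⊕ 𝔤_0 ⊕ 𝔤_2 where 𝔤_2 consists of multiplication operators L_x by elements x of a subspace A ⊆ H, 𝔤_0 preserves the subalgebra S generated by A, and for every Λ ∈ 𝔤_{−2} and x ∈ A the bracket [L_x, Λ] lies in 𝔤_0. Then the subalgebra S of H generated by A is invariant under the action of all of 𝔤. -/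
/-- Abstract form of the invariance of the Verbitsky component.  Let `H` be a commutative
algebra over `R` (the cohomology ring with cup product), `A ⊆ H` a subspace (the second
cohomology) and `S = ⟨A⟩` the subalgebra it generates.  Suppose `𝔤 = 𝔤₋₂ ⊕ 𝔤₀ ⊕ 𝔤₂` acts
on `H` by operators that are derivations for the product, where:
* every operator in `𝔤₂` is multiplication `L_x` by some `x ∈ A`;
* operators in `𝔤₀` preserve `S`;
* for every `Λ ∈ 𝔤₋₂` and `x ∈ A`, the commutator `[L_x, Λ]` lies in `𝔤₀`.
Then `S` is invariant under every operator of `𝔤`. -/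
theorem subalgebra_invariant_under_llv
    {R : Type*} [CommRing R] {H : Type*} [CommRing H] [Algebra R H]
    (A : Submodule R H)
    (Gm G0 Gp : Submodule R (Module.End R H))
    (hder : ∀ D ∈ Gm ⊔ G0 ⊔ Gp, ∀ x y : H, D (x * y) = D x * y + x * D y)
    (hGp : ∀ D ∈ Gp, ∃ a ∈ A, D = LinearMap.mulLeft R a)
    (hG0 : ∀ D ∈ G0, ∀ s ∈ Algebra.adjoin R (A : Set H), D s ∈ Algebra.adjoin R (A : Set H))
    (hbr : ∀ D ∈ Gm, ∀ a ∈ A,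
      LinearMap.mulLeft R a * D - D * LinearMap.mulLeft R a ∈ G0) :
    ∀ D ∈ Gm ⊔ G0 ⊔ Gp, ∀ s ∈ Algebra.adjoin R (A : Set H),
      D s ∈ Algebra.adjoin R (A : Set H) := by
  set S := Algebra.adjoin R (A : Set H) with hS
  -- each element of `Gm` preserves `S`
  have hGm : ∀ D ∈ Gm, ∀ s ∈ S, D s ∈ S := by
    intro Λ hΛ s hs
    have hΛ' : Λ ∈ Gm ⊔ G0 ⊔ Gp :=
      Submodule.mem_sup_left (Submodule.mem_sup_left hΛ)
    have hone : Λ 1 = 0 := by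
      have := hder Λ hΛ' 1 1
      simp at this
      linear_combination (norm := module) this
    induction hs using Algebra.adjoin_induction with
    | mem a ha =>
      have hbrm := hG0 _ (hbr Λ hΛ a ha) 1 (one_mem S)
      have hval : (LinearMap.mulLeft R a * Λ - Λ * LinearMap.mulLeft R a) (1 : H)
          = - Λ a := by
        simp [Module.End.mul_apply, hone]
      rw [hval] at hbrm
      simpa using neg_mem hbrm
    | algebraMap r =>
      have : (algebraMap R H) r = r • (1 : H) := Algebra.algebraMap_eq_smul_one r
      rw [this, map_smul, hone, smul_zero]
      exact zero_mem S
    | add x y hx hy ihx ihy =>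
      rw [map_add]; exact add_mem ihx ihy
    | mul x y hx hy ihx ihy =>
      rw [hder Λ hΛ' x y]
      exact add_mem (mul_mem ihx hy) (mul_mem hx ihy)
  -- each element of `Gp` preserves `S`
  have hGp' : ∀ D ∈ Gp, ∀ s ∈ S, D s ∈ S := by
    intro D hD s hs
    obtain ⟨a, ha, rfl⟩ := hGp D hD
    exact mul_mem (Algebra.subset_adjoin ha) hs
  -- combine
  intro D hD s hs
  obtain ⟨D1, hD1, D2, hD2, rfl⟩ := Submodule.mem_sup.mp hD
  obtain ⟨Dm, hDm, D0, hD0, rfl⟩ := Submodule.mem_sup.mp hD1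
  have : (Dm + D0 + D2) s = Dm s + D0 s + D2 s := rfl
  rw [this]
  exact add_mem (add_mem (hGm Dm hDm s hs) (hG0 D0 hD0 s hs)) (hGp' D2 hD2 s hs)
end
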